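/- Let X be a commutative topological monoid, A a submonoid, and f : K → L a simplicial map between simplicial complexes on vertex sets [n] and [m]. Then the map f̃ : X^n → X^m defined by f̃(x)_j = ∏_{i : f(i)=j} x_i restricts to a continuous map Z_K(X,A) → Z_L(X,A). -/

import Mathlib

/-- The generalized moment-angle complex `Z_K(X,A)` as a subset of `ι → X`. -/
def momentAngle {ι X : Type} (K : Set (Finset ι)) (A : Set X) : Set (ι → X) :=
  {x | ∃ σ ∈ K, ∀ i, i ∉ σ → x i ∈ A}

section FiberProd

variable {ι κ X : Type} [Fintype ι] [DecidableEq κ] [CommMonoid X]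

def fiberProd (f : ι → κ) (x : ι → X) : κ → X :=
  fun j => ∏ i ∈ Finset.univ.filter (fun i => f i = j), x i

theorem continuous_fiberProd [TopologicalSpace X] [ContinuousMul X] (f : ι → κ) :
    Continuous (fiberProd (X := X) f) :=
  continuous_pi fun _ => continuous_finsetProd _ fun i _ => continuous_apply i

theorem fiberProd_mem_of_notMem_image {A : Submonoid X} {f : ι → κ} {σ : Finset ι}
    {x : ι → X} (hx : ∀ i, i ∉ σ → x i ∈ A) {j : κ} (hj : j ∉ σ.image f) :
    fiberProd f x j ∈ A :=
  A.prod_mem fun i hi => hx i fun hiσ =>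
    hj ((Finset.mem_filter.mp hi).2 ▸ Finset.mem_image_of_mem f hiσ)

theorem mapsTo_fiberProd_momentAngle (A : Submonoid X) {K : Set (Finset ι)}
    {L : Set (Finset κ)} {f : ι → κ} (hf : ∀ σ ∈ K, σ.image f ∈ L) :
    Set.MapsTo (fiberProd f) (momentAngle K (A : Set X)) (momentAngle L (A : Set X)) := by
  rintro x ⟨σ, hσ, hx⟩
  exact ⟨σ.image f, hf σ hσ, fun j hj => fiberProd_mem_of_notMem_image hx hj⟩

end FiberProd

theorem momentAngle_monoid_map (n m : ℕ) (X : Type) [CommMonoid X] [TopologicalSpace X]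
    [ContinuousMul X] (A : Submonoid X)
    (K : Set (Finset (Fin n))) (L : Set (Finset (Fin m)))
    (f : Fin n → Fin m) (hf : ∀ σ ∈ K, σ.image f ∈ L) :
    Continuous (fun (x : Fin n → X) (j : Fin m) =>
      ∏ i ∈ Finset.univ.filter (fun i => f i = j), x i) ∧
    Set.MapsTo (fun (x : Fin n → X) (j : Fin m) =>
        ∏ i ∈ Finset.univ.filter (fun i => f i = j), x i)
      (momentAngle K (A : Set X)) (momentAngle L (A : Set X)) :=
  ⟨continuous_fiberProd f, mapsTo_fiberProd_momentAngle A hf⟩
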